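/- Let C ⊆ ℍⁿ_κ be a closed κ-hyperbolically convex set, p ∈ ℍⁿ_κ, and v ∈ C. Then v = P_C(p) if and only if −κ⟨p,v⟩v is a nonzero Lorentz projection of p into the cone K_C spanned by C. In particular, the set of nonzero Lorentz projections of p into K_C is nonempty. -/

import Mathlib

noncomputable section

/-- Lorentzian inner product on ℝ^{n+1}. -/
def lip {n : ℕ} (x y : Fin (n+1) → ℝ) : ℝ :=
  (∑ i : Fin n, x i.castSucc * y i.castSucc) - x (Fin.last n) * y (Fin.last n)

/-- Lorentzian norm (of vectors with nonnegative self-product). -/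
def lnorm {n : ℕ} (x : Fin (n+1) → ℝ) : ℝ := Real.sqrt (lip x x)

/-- Euclidean dot product. -/
def edot {n : ℕ} (x y : Fin (n+1) → ℝ) : ℝ := ∑ i, x i * y i

/-- The matrix J = diag(1,…,1,−1) as a map. -/
def Jm {n : ℕ} (x : Fin (n+1) → ℝ) : Fin (n+1) → ℝ :=
  fun i => if i = Fin.last n then -(x i) else x i

/-- The κ-hyperbolic space form (hyperboloid model). -/
def Hyp {n : ℕ} (κ : ℝ) : Set (Fin (n+1) → ℝ) :=
  {p | lip p p = -1/κ ∧ 0 < p (Fin.last n)}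

/-- Inverse hyperbolic cosine. -/
def arcosh (x : ℝ) : ℝ := Real.log (x + Real.sqrt (x^2 - 1))

/-- Intrinsic distance on the κ-hyperbolic space form. -/
def dH {n : ℕ} (κ : ℝ) (p q : Fin (n+1) → ℝ) : ℝ :=
  (1 / Real.sqrt κ) * arcosh (-(κ * lip p q))

/-- Lorentzian projection onto the tangent space at p. -/
def projT {n : ℕ} (κ : ℝ) (p x : Fin (n+1) → ℝ) : Fin (n+1) → ℝ :=
  x + (κ * lip p x) • p

/-- Logarithm map of the κ-hyperbolic space form. -/
def logH {n : ℕ} (κ : ℝ) (p q : Fin (n+1) → ℝ) : Fin (n+1) → ℝ :=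
  (dH κ p q / lnorm (projT κ p q)) • projT κ p q

/-- Exponential map of the κ-hyperbolic space form. -/
def expH {n : ℕ} (κ : ℝ) (p v : Fin (n+1) → ℝ) : Fin (n+1) → ℝ :=
  Real.cosh (Real.sqrt κ * lnorm v) • p +
    (Real.sinh (Real.sqrt κ * lnorm v) / (Real.sqrt κ * lnorm v)) • v

/-- The cone spanned by a set. -/
def coneOf {n : ℕ} (C : Set (Fin (n+1) → ℝ)) : Set (Fin (n+1) → ℝ) :=
  {x | ∃ t : ℝ, 0 ≤ t ∧ ∃ p ∈ C, x = t • p}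

/-- The Lorentz cone. -/
def LorentzCone {n : ℕ} : Set (Fin (n+1) → ℝ) :=
  {x | lip x x ≤ 0 ∧ 0 ≤ x (Fin.last n)}

/-- The interior of the Lorentz cone. -/
def LorentzConeInt {n : ℕ} : Set (Fin (n+1) → ℝ) :=
  {x | lip x x < 0 ∧ 0 < x (Fin.last n)}

/-! The choice `α = -κ⟨p,v⟩` makes `p - αv` Lorentz-orthogonal to `v`, so `αv` is a Lorentz
projection of `p` into `K_C` iff the linear inequality `⟨p,q⟩ ≤ α⟨v,q⟩` holds on `C`. Together
with the reverse Cauchy–Schwarz bound `⟨v,q⟩ ≤ -1/κ` this gives `⟨p,q⟩ ≤ ⟨p,v⟩`, so `v = P_C(p)`.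
Conversely, if `v` maximises `⟨p,·⟩` on `C`, then by homogeneity it maximises
`⟨p,w⟩ / √(-κ⟨w,w⟩)` on the convex cone `K_C`, and the first-order condition along the segment
from `v` to `q ∈ C` is exactly `⟨p,q⟩ ≤ α⟨v,q⟩`. -/

variable {n : ℕ}

lemma lip_comm (x y : Fin (n+1) → ℝ) : lip x y = lip y x := by
  simp [lip, mul_comm]

lemma lip_add_left (x y z : Fin (n+1) → ℝ) : lip (x + y) z = lip x z + lip y z := by
  simp only [lip, Pi.add_apply, add_mul, Finset.sum_add_distrib]; ring

lemma lip_sub_left (x y z : Fin (n+1) → ℝ) : lip (x - y) z = lip x z - lip y z := by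
  simp only [lip, Pi.sub_apply, sub_mul, Finset.sum_sub_distrib]; ring

lemma lip_smul_left (c : ℝ) (x y : Fin (n+1) → ℝ) : lip (c • x) y = c * lip x y := by
  simp only [lip, Pi.smul_apply, smul_eq_mul, mul_assoc, ← Finset.mul_sum, mul_sub]

lemma lip_add_right (x y z : Fin (n+1) → ℝ) : lip x (y + z) = lip x y + lip x z := by
  rw [lip_comm, lip_add_left, lip_comm y, lip_comm z]

lemma lip_sub_right (x y z : Fin (n+1) → ℝ) : lip x (y - z) = lip x y - lip x z := by
  rw [lip_comm, lip_sub_left, lip_comm y, lip_comm z]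

lemma lip_smul_right (c : ℝ) (x y : Fin (n+1) → ℝ) : lip x (c • y) = c * lip x y := by
  rw [lip_comm, lip_smul_left, lip_comm y]

/-- Reverse Cauchy–Schwarz inequality on the hyperboloid. -/
lemma lip_le_of_mem_Hyp {κ : ℝ} (hκ : 0 < κ) {x y : Fin (n+1) → ℝ}
    (hx : x ∈ Hyp κ) (hy : y ∈ Hyp κ) : lip x y ≤ -1/κ := by
  obtain ⟨hxx, hxl⟩ := hx
  obtain ⟨hyy, hyl⟩ := hy
  set S := ∑ i : Fin n, x i.castSucc * y i.castSucc
  set A := ∑ i : Fin n, x i.castSucc ^ 2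
  set B := ∑ i : Fin n, y i.castSucc ^ 2
  have hA : 0 ≤ A := Finset.sum_nonneg fun i _ => sq_nonneg _
  have hB : 0 ≤ B := Finset.sum_nonneg fun i _ => sq_nonneg _
  have hCS : S ^ 2 ≤ A * B := Finset.sum_mul_sq_le_sq_mul_sq _ _ _
  have hAM : 2 * S ≤ A + B := by nlinarith [sq_nonneg (A - B)]
  have hxA : x (Fin.last n) ^ 2 = A + 1/κ := by
    simp only [lip, ← sq] at hxx; rw [neg_div] at hxx; linarith
  have hyB : y (Fin.last n) ^ 2 = B + 1/κ := by
    simp only [lip, ← sq] at hyy; rw [neg_div] at hyy; linarith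
  have hc : 0 < 1/κ := by positivity
  show S - x (Fin.last n) * y (Fin.last n) ≤ -1/κ
  rw [neg_div]
  nlinarith [mul_pos hxl hyl, sq_nonneg (x (Fin.last n) - y (Fin.last n))]

lemma one_le_neg_mul_lip_of_mem_Hyp {κ : ℝ} (hκ : 0 < κ) {x y : Fin (n+1) → ℝ}
    (hx : x ∈ Hyp κ) (hy : y ∈ Hyp κ) : 1 ≤ -(κ * lip x y) := by
  have h := mul_le_mul_of_nonneg_left (lip_le_of_mem_Hyp hκ hx hy) hκ.le
  rw [mul_div_cancel₀ _ hκ.ne'] at h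
  linarith

lemma ne_zero_of_mem_Hyp {κ : ℝ} {x : Fin (n+1) → ℝ} (hx : x ∈ Hyp κ) : x ≠ 0 :=
  fun h => hx.2.ne' (by simp [h])

lemma subset_coneOf {C : Set (Fin (n+1) → ℝ)} : C ⊆ coneOf C :=
  fun q hq => ⟨1, zero_le_one, q, hq, (one_smul ℝ q).symm⟩

lemma smul_mem_coneOf {C : Set (Fin (n+1) → ℝ)} {t : ℝ} {q : Fin (n+1) → ℝ} (ht : 0 ≤ t)
    (hq : q ∈ C) : t • q ∈ coneOf C :=
  ⟨t, ht, q, hq, rfl⟩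

def IsLorentzProj (p : Fin (n+1) → ℝ) (K : Set (Fin (n+1) → ℝ)) (u : Fin (n+1) → ℝ) : Prop :=
  u ∈ K ∧ ∀ z ∈ K, lip (p - u) (z - u) ≤ 0

lemma isLorentzProj_smul_iff {κ : ℝ} (hκ : 0 < κ) {C : Set (Fin (n+1) → ℝ)} (hC : C ⊆ Hyp κ)
    {p v : Fin (n+1) → ℝ} (hp : p ∈ Hyp κ) (hv : v ∈ C) :
    IsLorentzProj p (coneOf C) ((-(κ * lip p v)) • v) ↔
      ∀ q ∈ C, lip p q ≤ -(κ * lip p v) * lip v q := by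
  set α := -(κ * lip p v)
  have hvv : κ * lip v v = -1 := by rw [(hC hv).1]; field_simp
  have hexpand : ∀ z, lip (p - α • v) (z - α • v) = lip p z - α * lip v z := by
    intro z
    simp only [lip_sub_left, lip_sub_right, lip_smul_left, lip_smul_right]
    linear_combination (-α * lip p v) * hvv
  have hα : 0 ≤ α := zero_le_one.trans (one_le_neg_mul_lip_of_mem_Hyp hκ hp (hC hv))
  refine ⟨fun ⟨_, hproj⟩ q hq => ?_, fun h => ⟨smul_mem_coneOf hα hv, ?_⟩⟩
  · have := hproj q (subset_coneOf hq)
    rw [hexpand] at this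
    linarith
  · rintro _ ⟨t, ht, q, hq, rfl⟩
    rw [hexpand, lip_smul_right, lip_smul_right]
    nlinarith [mul_le_mul_of_nonneg_left (h q hq) ht]

open Filter Topology in
lemma nonneg_of_forall_add_mul_nonneg {a b : ℝ} (h : ∀ s, 0 < s → s ≤ 1 → 0 ≤ b + a * s) :
    0 ≤ b := by
  have hlim : Tendsto (fun s => b + a * s) (𝓝[>] 0) (𝓝 b) := by
    have hcont : Continuous fun s : ℝ => b + a * s := by fun_prop
    simpa using (hcont.tendsto 0).mono_left nhdsWithin_le_nhds
  refine ge_of_tendsto hlim ?_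
  filter_upwards [Ioc_mem_nhdsGT one_pos] with s hs using h s hs.1 hs.2

/-- Squared form of `⟨p, w⟩ ≤ ⟨p, v⟩ √(-κ⟨w, w⟩)`, the maximality of `v` for the
degree-zero homogeneous extension of `⟨p, ·⟩` from `C` to its cone. -/
lemma sq_lip_le_of_isMaxOn {κ : ℝ} (hκ : 0 < κ) {C : Set (Fin (n+1) → ℝ)} (hC : C ⊆ Hyp κ)
    {p v w : Fin (n+1) → ℝ} (hpv : lip p v ≤ 0) (hmax : IsMaxOn (lip p) C v)
    (hw : w ∈ coneOf C) : -(κ * lip w w) * lip p v ^ 2 ≤ lip p w ^ 2 := by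
  obtain ⟨t, ht, q, hq, rfl⟩ := hw
  have hqq : κ * lip q q = -1 := by rw [(hC hq).1]; field_simp
  have hle : t * lip p q ≤ t * lip p v := mul_le_mul_of_nonneg_left (isMaxOn_iff.1 hmax q hq) ht
  have hnorm : -(κ * lip (t • q) (t • q)) = t ^ 2 := by
    rw [lip_smul_left, lip_smul_right]
    linear_combination (-t ^ 2) * hqq
  rw [hnorm, lip_smul_right, ← mul_pow]
  have hneg : t * lip p v ≤ 0 := mul_nonpos_of_nonneg_of_nonpos ht hpv
  nlinarith

lemma lip_le_of_isMaxOn {κ : ℝ} (hκ : 0 < κ) {C : Set (Fin (n+1) → ℝ)} (hC : C ⊆ Hyp κ)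
    (hconv : Convex ℝ (coneOf C)) {p v : Fin (n+1) → ℝ} (hp : p ∈ Hyp κ) (hv : v ∈ C)
    (hmax : IsMaxOn (lip p) C v) {q : Fin (n+1) → ℝ} (hq : q ∈ C) :
    lip p q ≤ -(κ * lip p v) * lip v q := by
  set M := lip p v
  set P := lip p q
  set V := lip v q
  have hM : M < 0 := by
    nlinarith [one_le_neg_mul_lip_of_mem_Hyp hκ hp (hC hv)]
  have hvv : κ * lip v v = -1 := by rw [(hC hv).1]; field_simp
  have hqq : κ * lip q q = -1 := by rw [(hC hq).1]; field_simp
  have hslope : ∀ s, 0 < s → s ≤ 1 →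
      0 ≤ 2 * M * (P + κ * M * V) + ((P - M) ^ 2 - 2 * M ^ 2 * (1 + κ * V)) * s := by
    intro s hs0 hs1
    have hw : (1 - s) • v + s • q ∈ coneOf C :=
      hconv (subset_coneOf hv) (subset_coneOf hq) (by linarith) hs0.le (by ring)
    have h := sq_lip_le_of_isMaxOn hκ hC hM.le hmax hw
    simp only [lip_add_left, lip_add_right, lip_smul_left, lip_smul_right, lip_comm q v] at h
    refine nonneg_of_mul_nonneg_right ?_ hs0
    linear_combination h + ((1 - s) ^ 2 * M ^ 2) * hvv + (s ^ 2 * M ^ 2) * hqq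
  nlinarith [nonneg_of_forall_add_mul_nonneg hslope]

lemma isLorentzProj_of_isMaxOn {κ : ℝ} (hκ : 0 < κ) {C : Set (Fin (n+1) → ℝ)}
    (hC : C ⊆ Hyp κ) (hconv : Convex ℝ (coneOf C)) {p v : Fin (n+1) → ℝ} (hp : p ∈ Hyp κ)
    (hv : v ∈ C) (hmax : IsMaxOn (lip p) C v) :
    IsLorentzProj p (coneOf C) ((-(κ * lip p v)) • v) :=
  (isLorentzProj_smul_iff hκ hC hp hv).2 fun _ hq => lip_le_of_isMaxOn hκ hC hconv hp hv hmax hq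

lemma smul_ne_zero_of_mem_Hyp {κ : ℝ} (hκ : 0 < κ) {p v : Fin (n+1) → ℝ} (hp : p ∈ Hyp κ)
    (hv : v ∈ Hyp κ) : (-(κ * lip p v)) • v ≠ 0 :=
  smul_ne_zero (by linarith [one_le_neg_mul_lip_of_mem_Hyp hκ hp hv]) (ne_zero_of_mem_Hyp hv)

theorem intrinsic_projection_iff_lorentz_projection_general {n : ℕ} (κ : ℝ) (hκ : 0 < κ)
    (C : Set (Fin (n+1) → ℝ)) (hC : C ⊆ Hyp κ)
    (hconv : Convex ℝ (coneOf C))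
    (p v : Fin (n+1) → ℝ) (hp : p ∈ Hyp κ) (hv : v ∈ C)
    (Pc : Fin (n+1) → ℝ) (hPmem : Pc ∈ C)
    (hPmax : ∀ q ∈ C, lip p q ≤ lip p Pc)
    (hPuniq : ∀ y ∈ C, (∀ q ∈ C, lip p q ≤ lip p y) → y = Pc) :
    ((v = Pc) ↔
      ((-(κ * lip p v)) • v ∈ coneOf C ∧ (-(κ * lip p v)) • v ≠ 0 ∧
        ∀ z ∈ coneOf C,
          lip (p - (-(κ * lip p v)) • v) (z - (-(κ * lip p v)) • v) ≤ 0)) ∧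
    ∃ u : Fin (n+1) → ℝ, u ≠ 0 ∧ u ∈ coneOf C ∧
      ∀ z ∈ coneOf C, lip (p - u) (z - u) ≤ 0 := by
  have hPproj := isLorentzProj_of_isMaxOn hκ hC hconv hp hPmem (isMaxOn_iff.2 hPmax)
  have hPne := smul_ne_zero_of_mem_Hyp hκ hp (hC hPmem)
  refine ⟨⟨?_, fun ⟨hmem, _, hineq⟩ => hPuniq v hv fun q hq => ?_⟩, ⟨_, hPne, hPproj⟩⟩
  · rintro rfl
    exact ⟨hPproj.1, hPne, hPproj.2⟩
  · have hα := one_le_neg_mul_lip_of_mem_Hyp hκ hp (hC hv)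
    calc lip p q ≤ -(κ * lip p v) * lip v q :=
          (isLorentzProj_smul_iff hκ hC hp hv).1 ⟨hmem, hineq⟩ q hq
      _ ≤ -(κ * lip p v) * (-1 / κ) :=
          mul_le_mul_of_nonneg_left (lip_le_of_mem_Hyp hκ (hC hv) (hC hq)) (by linarith)
      _ = lip p v := by field_simp

/-- Equivalence between the intrinsic κ-projection and the Lorentz projection:
v = P_C(p) iff −κ⟨p,v⟩v is a nonzero Lorentz projection of p into K_C; in particular
a nonzero Lorentz projection of p into K_C exists. Here P_C(p) is the (unique)
maximizer of ⟨p,·⟩ over C. -/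
theorem intrinsic_projection_iff_lorentz_projection {n : ℕ} (κ : ℝ) (hκ : 0 < κ)
    (C : Set (Fin (n+1) → ℝ)) (hC : C ⊆ Hyp κ) (hCc : IsClosed C)
    (hconv : Convex ℝ (coneOf C))
    (p v : Fin (n+1) → ℝ) (hp : p ∈ Hyp κ) (hv : v ∈ C)
    (Pc : Fin (n+1) → ℝ) (hPmem : Pc ∈ C)
    (hPmax : ∀ q ∈ C, lip p q ≤ lip p Pc)
    (hPuniq : ∀ y ∈ C, (∀ q ∈ C, lip p q ≤ lip p y) → y = Pc) :
    ((v = Pc) ↔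
      ((-(κ * lip p v)) • v ∈ coneOf C ∧ (-(κ * lip p v)) • v ≠ 0 ∧
        ∀ z ∈ coneOf C,
          lip (p - (-(κ * lip p v)) • v) (z - (-(κ * lip p v)) • v) ≤ 0)) ∧
    ∃ u : Fin (n+1) → ℝ, u ≠ 0 ∧ u ∈ coneOf C ∧
      ∀ z ∈ coneOf C, lip (p - u) (z - u) ≤ 0 :=
  intrinsic_projection_iff_lorentz_projection_general κ hκ C hC hconv p v hp hv Pc hPmem hPmax
    hPuniq
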